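/- arXiv:1205.7066 — 3 statements merged into one kernel-verified Lean document; each statement's English description precedes it below -/
import Mathlib

section
/- Let ξ, σ ∈ ℝ with ξ ≠ 0 and μ ∈ ℝ² , and define s = (|μ|² − σ² + ξ²) + 2iξσ ∈ ℂ and m = (ξ + iσ)/√s (taking the branch of the square root with positive real part). Then |m| ≤ 2·(1 + |μ|²/ξ²)^{1/4}. -/
open Complex

/-!
Write `z = ξ + iσ` and `a = |μ|²`; then `s = z² + a`, so `|m|⁴ = |z|⁴ / |z² + a|²` and the claim
is the polynomial inequality `|z|⁴ ξ² ≤ 16 (ξ² + a) |z² + a|²`, in fact true with `5` for `16`.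
With `x = ξ²`, `t = σ²` one has `|z² + a|² = (t - a + x)² + 4ax ≥ x² + 2x(a + t)`, which absorbs
`x (x + t)² - x t²`; the remaining `x t²` is controlled by `a |z² + a|²` when `t ≤ 2a`, and by
`x |z² + a|² ≥ x (t - a)² ≥ x t² / 4` when `t ≥ 2a`.
-/

theorem sq_add_mul_le_five_mul {x t a : ℝ} (hx : 0 ≤ x) (ht : 0 ≤ t) (ha : 0 ≤ a) :
    (x + t) ^ 2 * x ≤ 5 * (x + a) * ((a - t + x) ^ 2 + 4 * x * t) := by
  set D := (a - t + x) ^ 2 + 4 * x * t with hD_def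
  have hD_alt : D = (t - a + x) ^ 2 + 4 * x * a := by rw [hD_def]; ring
  have hD_nonneg : 0 ≤ D := by rw [hD_alt]; positivity
  have hD : x ^ 2 + 2 * x * (a + t) ≤ D := by nlinarith [sq_nonneg (a - t)]
  have hxt : x * t ^ 2 ≤ 4 * (x + a) * D := by
    rcases le_total t (2 * a) with h | h
    · nlinarith [mul_le_mul_of_nonneg_left h (mul_nonneg hx ht), sq_nonneg (a - t + x)]
    · have ht_sq : t ^ 2 ≤ 4 * D := by
        rw [hD_alt]
        nlinarith [mul_nonneg hx (sub_nonneg.2 (h.trans' (by linarith : a ≤ 2 * a)))]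
      nlinarith [mul_le_mul_of_nonneg_left ht_sq hx, mul_nonneg ha hD_nonneg]
  nlinarith [mul_le_mul_of_nonneg_left hD hx, mul_nonneg ha hD_nonneg, mul_nonneg ha (sq_nonneg x)]

theorem norm_pow_four_mul_re_sq_le (z : ℂ) {a : ℝ} (ha : 0 ≤ a) :
    ‖z‖ ^ 4 * z.re ^ 2 ≤ 5 * (z.re ^ 2 + a) * ‖z ^ 2 + a‖ ^ 2 := by
  have hz : ‖z‖ ^ 2 = z.re ^ 2 + z.im ^ 2 := by
    rw [← normSq_eq_norm_sq, normSq_apply]; ring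
  have hs : ‖z ^ 2 + a‖ ^ 2 = (a - z.im ^ 2 + z.re ^ 2) ^ 2 + 4 * z.re ^ 2 * z.im ^ 2 := by
    rw [← normSq_eq_norm_sq, normSq_apply]
    simp only [pow_two, add_re, mul_re, ofReal_re, add_im, mul_im, ofReal_im, add_zero]
    ring
  rw [show ‖z‖ ^ 4 = (‖z‖ ^ 2) ^ 2 by ring, hz, hs]
  exact sq_add_mul_le_five_mul (sq_nonneg _) (sq_nonneg _) ha

theorem rpow_one_div_two_pow_four {r : ℝ} (hr : 0 ≤ r) : (r ^ ((1 : ℝ) / 2)) ^ 4 = r ^ 2 := by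
  rw [← Real.rpow_mul_natCast hr]; norm_num

theorem rpow_one_div_four_pow_four {r : ℝ} (hr : 0 ≤ r) : (r ^ ((1 : ℝ) / 4)) ^ 4 = r := by
  rw [← Real.rpow_mul_natCast hr]; norm_num

theorem norm_div_cpow_half_le (z : ℂ) {a : ℝ} (ha : 0 ≤ a) (hz : z.re ≠ 0) :
    ‖z / (z ^ 2 + a) ^ (1 / 2 : ℂ)‖ ≤ 2 * (1 + a / z.re ^ 2) ^ (1 / 4 : ℝ) := by
  have hre : 0 < z.re ^ 2 := by positivity
  have hc : 0 ≤ 1 + a / z.re ^ 2 := by positivity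
  have hbound : ‖z‖ ^ 4 ≤ 5 * (1 + a / z.re ^ 2) * ‖z ^ 2 + a‖ ^ 2 := by
    rw [show 5 * (1 + a / z.re ^ 2) = 5 * (z.re ^ 2 + a) / z.re ^ 2 by field_simp,
      div_mul_eq_mul_div, le_div_iff₀ hre]
    exact norm_pow_four_mul_re_sq_le z ha
  rw [norm_div, show (1 / 2 : ℂ) = ((1 / 2 : ℝ) : ℂ) by norm_num, norm_cpow_real,
    ← pow_le_pow_iff_left₀ (by positivity) (by positivity) four_ne_zero,
    div_pow, rpow_one_div_two_pow_four (norm_nonneg _), mul_pow, rpow_one_div_four_pow_four hc]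
  -- `div_le_of_le_mul₀` also covers `z² + a = 0`, where the quotient is `0` by convention
  refine div_le_of_le_mul₀ (by positivity) (by positivity) (hbound.trans ?_)
  gcongr
  norm_num

/-- Multiplier bound for the Fourier–Laplace symbol in the hidden trace
regularity lemma: with `s = (|μ|² − σ² + ξ²) + 2iξσ` and
`m = (ξ + iσ)/√s`, one has `|m| ≤ 2 (1 + |μ|²/ξ²)^{1/4}`. -/
theorem stmt_0 (ξ σ : ℝ) (hξ : ξ ≠ 0) (μ : EuclideanSpace ℝ (Fin 2)) :
    ‖((ξ + σ * Complex.I) /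
      ((((‖μ‖ ^ 2 - σ ^ 2 + ξ ^ 2 : ℝ) : ℂ) + 2 * ξ * σ * Complex.I) ^ ((1 : ℂ) / 2)) : ℂ)‖
      ≤ 2 * (1 + ‖μ‖ ^ 2 / ξ ^ 2) ^ ((1 : ℝ) / 4) := by
  have hs : (((‖μ‖ ^ 2 - σ ^ 2 + ξ ^ 2 : ℝ) : ℂ) + 2 * ξ * σ * Complex.I)
      = (ξ + σ * Complex.I) ^ 2 + ((‖μ‖ ^ 2 : ℝ) : ℂ) := by
    push_cast
    linear_combination (-σ ^ 2) * I_sq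
  have hre : (ξ + σ * Complex.I).re = ξ := by simp
  rw [hs]
  simpa only [hre] using norm_div_cpow_half_le (ξ + σ * Complex.I) (sq_nonneg ‖μ‖) (by rwa [hre])
end

section
/- Fix U > 1 and μ > 0, and set c_U = U² − 1. There exist r > 0 and c₀ > 0 such that for all ω ∈ ℝ and k ∈ ℝ², |−c_U ω² + i r U ω + |k|² + μ|² ≥ c₀·(|k|² + ω² + 1). -/
/-! With `r = 1` the squared modulus of the symbol is `(X - Y)² + U²ω²`, where `X = |k|² + μ ≥ μ`
and `Y = c_U ω² ≤ U²ω²`. If `Y ≤ X / 2` the real part alone is at least `X / 2`, which controls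
`X + Y` because `X ≥ μ`; otherwise `Y` is comparable to `X + Y` and the imaginary part wins.
Finally `|k|² + ω² + 1` is bounded by a multiple of `X + Y`. -/

lemma mul_add_le_sq_sub_add {μ X Y : ℝ} (hμ : 0 < μ) (hX : μ ≤ X) (hY : 0 ≤ Y) :
    min (μ / 6) (1 / 3) * (X + Y) ≤ (X - Y) ^ 2 + Y := by
  rcases le_or_gt Y (X / 2) with hYX | hYX
  · have hreal : μ * X / 4 ≤ (X - Y) ^ 2 := by nlinarith
    calc min (μ / 6) (1 / 3) * (X + Y) ≤ μ / 6 * (X + Y) := by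
          gcongr
          · linarith
          · exact min_le_left _ _
      _ ≤ (X - Y) ^ 2 + Y := by nlinarith
  · calc min (μ / 6) (1 / 3) * (X + Y) ≤ 1 / 3 * (X + Y) := by
          gcongr
          · linarith
          · exact min_le_right _ _
      _ ≤ (X - Y) ^ 2 + Y := by nlinarith [sq_nonneg (X - Y)]

lemma add_sq_add_one_le {a μ c ω : ℝ} (ha : 0 ≤ a) (hμ : 0 < μ) (hc : 0 < c) :
    a + ω ^ 2 + 1 ≤ (1 + 1 / μ + 1 / c) * (a + μ + c * ω ^ 2) := by
  have hone : 1 ≤ (a + μ) / μ := by rw [le_div_iff₀ hμ]; linarith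
  have hω : ω ^ 2 = c * ω ^ 2 / c := by field_simp
  have hexpand : (1 + 1 / μ + 1 / c) * (a + μ + c * ω ^ 2)
      = (a + μ) + (a + μ) / μ + c * ω ^ 2 / c + (c * ω ^ 2 + c * ω ^ 2 / μ + (a + μ) / c) := by
    ring
  have hrest : 0 ≤ c * ω ^ 2 + c * ω ^ 2 / μ + (a + μ) / c := by positivity
  linarith

/-- Lower bound on the Fourier symbol of the shifted supersonic static flow
operator: for `U > 1`, `μ > 0`, `c_U = U² − 1`, there are `r, c₀ > 0` with
`|−c_U ω² + i r U ω + |k|² + μ|² ≥ c₀ (|k|² + ω² + 1)` for all `ω ∈ ℝ`,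
`k ∈ ℝ²`. -/
theorem stmt_3 (U μ : ℝ) (hU : 1 < U) (hμ : 0 < μ) :
    ∃ r > (0 : ℝ), ∃ c₀ > (0 : ℝ), ∀ (ω : ℝ) (k : EuclideanSpace ℝ (Fin 2)),
      c₀ * (‖k‖ ^ 2 + ω ^ 2 + 1) ≤
        ‖((‖k‖ ^ 2 + μ - (U ^ 2 - 1) * ω ^ 2 : ℝ) : ℂ)
          + (r * U * ω : ℝ) * Complex.I‖ ^ 2 := by
  have hc : 0 < U ^ 2 - 1 := by nlinarith
  set K := 1 + 1 / μ + 1 / (U ^ 2 - 1)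
  have hK : 0 < K := by positivity
  refine ⟨1, one_pos, min (μ / 6) (1 / 3) / K, by positivity, fun ω k => ?_⟩
  rw [Complex.sq_norm, Complex.normSq_add_mul_I]
  have hY : 0 ≤ (U ^ 2 - 1) * ω ^ 2 := by positivity
  calc min (μ / 6) (1 / 3) / K * (‖k‖ ^ 2 + ω ^ 2 + 1)
      ≤ min (μ / 6) (1 / 3) / K * (K * (‖k‖ ^ 2 + μ + (U ^ 2 - 1) * ω ^ 2)) := by
        gcongr
        exact add_sq_add_one_le (by positivity) hμ hc
    _ = min (μ / 6) (1 / 3) * (‖k‖ ^ 2 + μ + (U ^ 2 - 1) * ω ^ 2) := by field_simp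
    _ ≤ (‖k‖ ^ 2 + μ - (U ^ 2 - 1) * ω ^ 2) ^ 2 + (U ^ 2 - 1) * ω ^ 2 :=
        mul_add_le_sq_sub_add hμ (by linarith [sq_nonneg ‖k‖]) hY
    _ ≤ (‖k‖ ^ 2 + μ - (U ^ 2 - 1) * ω ^ 2) ^ 2 + (1 * U * ω) ^ 2 := by nlinarith
end

section
/- Let Ω ⊂ ℝ² be a bounded domain with diameter d, and let u ∈ C²(Ω̄) with u = 0 on ∂Ω. Then max_{x∈Ω̄} |u(x)| ≤ (d/√π)·‖[u,u]‖_{L¹(Ω)}^{1/2}, where [u,u] = 2(u_{xx}u_{yy} − u_{xy}²) is the Monge–Ampère expression (the von Karman bracket of u with itself). -/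
/-!
Let `M = |u x₀| > 0`, `d = diam Ω` and `‖q‖ < M / d`. Choosing the sign with `±u x₀ = M`, the
function `±u - ⟪q, ·⟫` is larger at `x₀` than anywhere on `∂Ω`, so its maximum over `closure Ω`
is attained inside `Ω`, where `∇(±u) = q`. Hence the disc of radius `M / d` lies in `∇u '' Ω`,
and the area formula bounds its area `π M² / d²` by `∫_Ω |det D(∇u)| = ½ ‖[u,u]‖_{L¹(Ω)}`.
-/

open MeasureTheory Metric InnerProductSpace Real
open scoped Gradient RealInnerProductSpace

section

variable {E F : Type*} [NormedAddCommGroup E] [NormedSpace ℝ E]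
  [NormedAddCommGroup F] [NormedSpace ℝ F]

theorem fderiv_fderiv_apply_right {u : E → F} {y : E}
    (hu : DifferentiableAt ℝ (fderiv ℝ u) y) (v w : E) :
    fderiv ℝ (fun z => fderiv ℝ u z w) y v = fderiv ℝ (fderiv ℝ u) y v w := by
  rw [fderiv_clm_apply hu (differentiableAt_const w)]
  simp

theorem volume_image_le_integral_abs_det [FiniteDimensional ℝ E] [MeasurableSpace E]
    [BorelSpace E] (μ : Measure E) [μ.IsAddHaarMeasure] {s : Set E} (hs : MeasurableSet s)
    {f : E → E} {f' : E → E →L[ℝ] E} (hf' : ∀ x ∈ s, HasFDerivWithinAt f (f' x) s x)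
    (hint : IntegrableOn (fun x => (f' x).det) s μ) :
    μ (f '' s) ≤ ENNReal.ofReal (∫ x in s, |(f' x).det| ∂μ) := by
  rw [ofReal_integral_eq_lintegral_ofReal hint.abs (.of_forall fun _ => abs_nonneg _)]
  exact addHaar_image_le_lintegral_abs_det_fderiv μ hs hf'

end

section

variable {E : Type*} [NormedAddCommGroup E] [InnerProductSpace ℝ E]

theorem ContDiff.gradient [CompleteSpace E] {u : E → ℝ} {n : WithTop ℕ∞}
    (hu : ContDiff ℝ (n + 1) u) : ContDiff ℝ n (∇ u) :=
  (toDual ℝ E).symm.contDiff.comp (hu.fderiv_right le_rfl)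

theorem IsOpen.diam_pos [Nontrivial E] {Ω : Set E} (hopen : IsOpen Ω) (hne : Ω.Nonempty)
    (hbdd : Bornology.IsBounded Ω) : 0 < diam Ω := by
  refine Metric.diam_pos (Set.not_subsingleton_iff.1 fun hsub => ?_) hbdd
  obtain ⟨z, hz⟩ := hne
  exact not_isOpen_singleton z (hsub.eq_singleton_of_mem hz ▸ hopen)

variable [ProperSpace E] {Ω : Set E} (hopen : IsOpen Ω) (hbdd : Bornology.IsBounded Ω)
  {u : E → ℝ} (hu : Differentiable ℝ u) (hbc : ∀ x ∈ frontier Ω, u x = 0)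
  {x₀ : E} (hx₀ : x₀ ∈ closure Ω)
include hopen hbdd hu hbc hx₀

theorem exists_mem_fderiv_eq_inner {q : E} (hq : ‖q‖ * diam Ω < u x₀) :
    ∃ x ∈ Ω, ∀ y, fderiv ℝ u x y = ⟪q, y⟫ := by
  set v : E → ℝ := fun x => u x - ⟪q, x⟫
  obtain ⟨x, hx, hmax⟩ := hbdd.isCompact_closure.exists_isMaxOn ⟨x₀, hx₀⟩
    (hu.continuous.sub (continuous_const.inner continuous_id)).continuousOn
  have hfrontier : ∀ y ∈ frontier Ω, v y < v x₀ := by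
    intro y hy
    have hdist : dist x₀ y ≤ diam Ω := by
      simpa only [diam_closure] using
        dist_le_diam_of_mem hbdd.closure hx₀ (frontier_subset_closure hy)
    have : ⟪q, x₀ - y⟫ < u x₀ := calc
      ⟪q, x₀ - y⟫ ≤ ‖q‖ * dist x₀ y := by rw [dist_eq_norm]; exact real_inner_le_norm _ _
      _ ≤ ‖q‖ * diam Ω := by gcongr
      _ < u x₀ := hq
    simp only [v, hbc y hy, inner_sub_right] at this ⊢
    linarith
  have hxΩ : x ∈ Ω := by
    by_contra h
    have : x ∈ frontier Ω := ⟨hx, by rwa [hopen.interior_eq]⟩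
    exact (hfrontier x this).not_ge (hmax hx₀)
  have hlocal : IsLocalMax v x :=
    hmax.isLocalMax (Filter.mem_of_superset (hopen.mem_nhds hxΩ) subset_closure)
  have hv : HasFDerivAt v (fderiv ℝ u x - innerSL ℝ q) x :=
    (hu x).hasFDerivAt.sub (innerSL ℝ q).hasFDerivAt
  refine ⟨x, hxΩ, fun y => ?_⟩
  simpa [sub_eq_zero] using congr($(hlocal.hasFDerivAt_eq_zero hv) y)

theorem ball_subset_image_gradient (hdiam : 0 < diam Ω) :
    ball 0 (|u x₀| / diam Ω) ⊆ ∇ u '' Ω := by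
  intro p hp
  rw [mem_ball_zero_iff, lt_div_iff₀ hdiam] at hp
  suffices ∃ x ∈ Ω, ∀ y, fderiv ℝ u x y = ⟪p, y⟫ by
    obtain ⟨x, hx, hux⟩ := this
    exact ⟨x, hx, ext_inner_right ℝ fun y => by rw [inner_gradient_left, hux]⟩
  rcases le_or_gt 0 (u x₀) with h | h
  · exact exists_mem_fderiv_eq_inner hopen hbdd hu hbc hx₀ (by rwa [abs_of_nonneg h] at hp)
  · obtain ⟨x, hx, hux⟩ := exists_mem_fderiv_eq_inner (u := -u) (q := -p) hopen hbdd hu.neg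
      (fun x hx => by simp [hbc x hx]) hx₀ (by rwa [abs_of_neg h, ← norm_neg] at hp)
    refine ⟨x, hx, fun y => ?_⟩
    simpa [fderiv_neg, inner_neg_left] using hux y

end

section

local notation "ℝ²" => EuclideanSpace ℝ (Fin 2)

theorem ContinuousLinearMap.det_euclideanSpace_fin_two (T : ℝ² →L[ℝ] ℝ²) :
    T.det = T (EuclideanSpace.single 0 1) 0 * T (EuclideanSpace.single 1 1) 1
      - T (EuclideanSpace.single 1 1) 0 * T (EuclideanSpace.single 0 1) 1 := by
  rw [ContinuousLinearMap.det, ← LinearMap.det_toMatrix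
    (EuclideanSpace.basisFun (Fin 2) ℝ).toBasis, Matrix.det_fin_two]
  simp [LinearMap.toMatrix_apply]

theorem det_fderiv_gradient {u : ℝ² → ℝ} {y : ℝ²} (hu : ContDiffAt ℝ 2 u y) :
    (fderiv ℝ (∇ u) y).det =
      fderiv ℝ (fun z => fderiv ℝ u z (EuclideanSpace.single 0 1)) y
          (EuclideanSpace.single 0 1) *
        fderiv ℝ (fun z => fderiv ℝ u z (EuclideanSpace.single 1 1)) y
          (EuclideanSpace.single 1 1) -
      (fderiv ℝ (fun z => fderiv ℝ u z (EuclideanSpace.single 0 1)) y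
        (EuclideanSpace.single 1 1)) ^ 2 := by
  have hdiff : DifferentiableAt ℝ (fderiv ℝ u) y :=
    (hu.fderiv_right le_rfl).differentiableAt one_ne_zero
  have hcoord : ∀ v i,
      fderiv ℝ (∇ u) y v i = fderiv ℝ (fderiv ℝ u) y v (EuclideanSpace.single i 1) := by
    intro v i
    have : ∇ u = (toDual ℝ ℝ²).symm ∘ fderiv ℝ u := rfl
    rw [this, LinearIsometryEquiv.comp_fderiv, ContinuousLinearMap.comp_apply,
      ← toDual_symm_apply, real_inner_comm, EuclideanSpace.inner_single_left]
    simp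
  rw [ContinuousLinearMap.det_euclideanSpace_fin_two]
  simp only [hcoord, fderiv_fderiv_apply_right hdiff,
    hu.isSymmSndFDerivAt (by simp) (EuclideanSpace.single 1 1)]
  ring

end

theorem stmt_13_general (Ω : Set (EuclideanSpace ℝ (Fin 2)))
    (hopen : IsOpen Ω) (hbdd : Bornology.IsBounded Ω)
    (u : EuclideanSpace ℝ (Fin 2) → ℝ) (hu : ContDiff ℝ 2 u)
    (hbc : ∀ x ∈ frontier Ω, u x = 0) :
    ∀ x ∈ closure Ω,
      |u x| ≤ (Metric.diam Ω / Real.sqrt Real.pi) *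
        Real.sqrt (∫ y in Ω,
          |2 * (fderiv ℝ (fun z => fderiv ℝ u z (EuclideanSpace.single 0 1)) y
                  (EuclideanSpace.single 0 1) *
                fderiv ℝ (fun z => fderiv ℝ u z (EuclideanSpace.single 1 1)) y
                  (EuclideanSpace.single 1 1) -
                (fderiv ℝ (fun z => fderiv ℝ u z (EuclideanSpace.single 0 1)) y
                  (EuclideanSpace.single 1 1)) ^ 2)|) := by
  intro x₀ hx₀
  have hdiam : 0 < diam Ω := hopen.diam_pos (closure_nonempty_iff.1 ⟨x₀, hx₀⟩) hbdd
  have hgrad : ContDiff ℝ 1 (∇ u) := hu.gradient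
  have hint : IntegrableOn (fun y => (fderiv ℝ (∇ u) y).det) Ω :=
    ((ContinuousLinearMap.continuous_det.comp (hgrad.continuous_fderiv one_ne_zero)).continuousOn
      |>.integrableOn_compact hbdd.isCompact_closure).mono_set subset_closure
  have harea := (measure_mono (ball_subset_image_gradient hopen hbdd
    (hu.differentiable two_ne_zero) hbc hx₀ hdiam)).trans
      (volume_image_le_integral_abs_det volume hopen.measurableSet
        (fun y _ => (hgrad.differentiable one_ne_zero y).hasFDerivAt.hasFDerivWithinAt) hint)
  have hJ : 0 ≤ ∫ y in Ω, |(fderiv ℝ (∇ u) y).det| := integral_nonneg fun _ => abs_nonneg _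
  rw [EuclideanSpace.volume_ball_fin_two, ← ENNReal.ofReal_pow (by positivity),
    ← ENNReal.ofReal_mul (by positivity), ENNReal.ofReal_le_ofReal_iff hJ] at harea
  simp_rw [← det_fderiv_gradient hu.contDiffAt, abs_mul, abs_two]
  rw [integral_const_mul]
  calc |u x₀| = diam Ω / √π * √(π * (|u x₀| / diam Ω) ^ 2) := by
        rw [Real.sqrt_mul pi_nonneg, Real.sqrt_sq (by positivity)]
        field_simp
    _ ≤ diam Ω / √π * √(2 * ∫ y in Ω, |(fderiv ℝ (∇ u) y).det|) := by
        gcongr _ * √?_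
        linarith

/-- Maximum principle for the Monge–Ampère expression (von Karman bracket):
for a bounded domain `Ω ⊂ ℝ²` of diameter `d` and `u ∈ C²` vanishing on `∂Ω`,
`max_{Ω̄} |u| ≤ (d/√π) ‖[u,u]‖_{L¹(Ω)}^{1/2}` where
`[u,u] = 2(u_{xx}u_{yy} − u_{xy}²)`. -/
theorem stmt_13 (Ω : Set (EuclideanSpace ℝ (Fin 2)))
    (hopen : IsOpen Ω) (hconn : IsConnected Ω) (hbdd : Bornology.IsBounded Ω)
    (u : EuclideanSpace ℝ (Fin 2) → ℝ) (hu : ContDiff ℝ 2 u)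
    (hbc : ∀ x ∈ frontier Ω, u x = 0) :
    ∀ x ∈ closure Ω,
      |u x| ≤ (Metric.diam Ω / Real.sqrt Real.pi) *
        Real.sqrt (∫ y in Ω,
          |2 * (fderiv ℝ (fun z => fderiv ℝ u z (EuclideanSpace.single 0 1)) y
                  (EuclideanSpace.single 0 1) *
                fderiv ℝ (fun z => fderiv ℝ u z (EuclideanSpace.single 1 1)) y
                  (EuclideanSpace.single 1 1) -
                (fderiv ℝ (fun z => fderiv ℝ u z (EuclideanSpace.single 0 1)) y
                  (EuclideanSpace.single 1 1)) ^ 2)|) :=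
  stmt_13_general Ω hopen hbdd u hu hbc
end
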